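/- Let d, m ≥ 1, let g : [-1,1] → [-∞,∞), let A = {t_1,...,t_{m+1}} with -1 ≤ t_1 < ... < t_{m+1} ≤ 1, and let q be a polynomial with q(t_i) = g(t_i) for all i and q(t) ≥ g(t) on [-1,1]. If ω_N = {x_1,...,x_N} ⊂ S^d is a spherical L-design with L ≥ deg q, and y ∈ S^d satisfies D(y, ω_N) ⊆ A, then the potential p^g(x, ω_N) = Σ_{i=1}^N g(x·x_i) attains its absolute maximum over S^d at the point y. -/

import Mathlib

open scoped RealInnerProductSpace
open MeasureTheory Set

noncomputable section

/-- Euclidean space `ℝ^{d+1}` containing the sphere `S^d`. -/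
abbrev E (d : ℕ) := EuclideanSpace ℝ (Fin (d+1))

/-- The unit sphere `S^d ⊂ ℝ^{d+1}`. -/
def sph (d : ℕ) : Set (E d) := Metric.sphere 0 1

/-- Normalized surface (Hausdorff) measure `σ_d` on `S^d`. -/
def sigmad (d : ℕ) : Measure (E d) :=
  (μH[(d:ℝ)] (sph d))⁻¹ • (μH[(d:ℝ)]).restrict (sph d)

/-- `ω = (x i)` is a spherical `n`-design: averages of polynomials of degree
at most `n` over the configuration coincide with their `σ_d`-averages. -/
def IsDesign (d n : ℕ) {ι : Type} [Fintype ι] (x : ι → E d) : Prop :=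
  ∀ p : MvPolynomial (Fin (d+1)) ℝ, p.totalDegree ≤ n →
    (Fintype.card ι : ℝ)⁻¹ * ∑ i, MvPolynomial.eval (fun j => x i j) p =
      ∫ y, MvPolynomial.eval (fun j => y j) p ∂(sigmad d)

/-- The set of dot products between distinct points of the configuration. -/
def dotSet {d : ℕ} {ι : Type} (x : ι → E d) : Set ℝ :=
  {t | ∃ i j, i ≠ j ∧ (inner ℝ (x i) (x j) : ℝ) = t}

/-- An `m`-sharp configuration on `S^d`: a spherical `(2m-1)`-design whose
distinct points realize exactly `m` distinct dot products. -/
def IsSharp (d m : ℕ) {ι : Type} [Fintype ι] (x : ι → E d) : Prop :=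
  (∀ i, x i ∈ sph d) ∧ Function.Injective x ∧
    IsDesign d (2*m-1) x ∧ (dotSet x).ncard = m

/-- A strongly `m`-sharp configuration: an `m`-sharp configuration which is
moreover a spherical `2m`-design. -/
def IsStronglySharp (d m : ℕ) {ι : Type} [Fintype ι] (x : ι → E d) : Prop :=
  IsSharp d m x ∧ IsDesign d (2*m) x

/-- An antipodal (centrally symmetric) configuration. -/
def IsAntipodal {d : ℕ} {ι : Type} (x : ι → E d) : Prop :=
  ∀ i, ∃ j, x j = -x i

/-! Since `g ≤ q` on `[-1,1]`, the potential at `z ∈ S^d` is at most `∑ i, q ⟪z, x i⟫`. As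
`u ↦ q ⟪z, u⟫` is a polynomial of degree `≤ L`, the design property turns this sum into
`N ∫ q ⟪z, u⟫ dσ_d(u)`, which is independent of `z` because `σ_d` is invariant under the
reflection mapping `y` to `z`. At `y` every `⟪y, x i⟫` is a node where `q` interpolates `g`,
so the bound is attained there. -/

open scoped Polynomial

namespace MvPolynomial

variable {σ R : Type*} [CommRing R]

def linearForm [Fintype σ] (w : σ → R) : MvPolynomial σ R := ∑ j, C (w j) * X j

lemma eval_linearForm [Fintype σ] (w v : σ → R) : eval v (linearForm w) = ∑ j, w j * v j := by
  simp [linearForm]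

lemma totalDegree_linearForm_le [Fintype σ] (w : σ → R) : (linearForm w).totalDegree ≤ 1 := by
  refine (totalDegree_finsetSum _ _).trans (Finset.sup_le fun j _ => ?_)
  rw [C_mul_X_eq_monomial]
  exact (totalDegree_monomial_le _ _).trans (by simp)

lemma eval_aeval (v : σ → R) (f : MvPolynomial σ R) (q : R[X]) :
    eval v (Polynomial.aeval f q) = q.eval (eval v f) := by
  rw [Polynomial.aeval_def, Polynomial.hom_eval₂, algebraMap_eq, eval, eval₂Hom_comp_C]
  rfl

lemma totalDegree_aeval_le (f : MvPolynomial σ R) (q : R[X]) :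
    (Polynomial.aeval f q).totalDegree ≤ q.natDegree * f.totalDegree := by
  rw [Polynomial.aeval_eq_sum_range]
  refine (totalDegree_finsetSum _ _).trans (Finset.sup_le fun k hk => ?_)
  have hk : k ≤ q.natDegree := Nat.lt_succ_iff.mp (Finset.mem_range.mp hk)
  calc (q.coeff k • f ^ k).totalDegree ≤ (f ^ k).totalDegree := totalDegree_smul_le _ _
    _ ≤ k * f.totalDegree := totalDegree_pow _ _
    _ ≤ q.natDegree * f.totalDegree := Nat.mul_le_mul_right _ hk

end MvPolynomial

lemma EReal.coe_finset_sum {ι : Type*} (s : Finset ι) (f : ι → ℝ) :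
    ((∑ i ∈ s, f i : ℝ) : EReal) = ∑ i ∈ s, (f i : EReal) :=
  map_sum (⟨⟨(↑), EReal.coe_zero⟩, EReal.coe_add⟩ : ℝ →+ EReal) f s

lemma sigmad_map_linearIsometryEquiv (d : ℕ) (T : E d ≃ₗᵢ[ℝ] E d) :
    (sigmad d).map T = sigmad d := by
  have hpre : (T : E d → E d) ⁻¹' sph d = sph d := by
    ext u
    simp [sph]
  rw [sigmad, Measure.map_smul]
  congr 1
  calc (μH[(d:ℝ)].restrict (sph d)).map T = (μH[(d:ℝ)].restrict (T ⁻¹' sph d)).map T := by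
        rw [hpre]
    _ = (μH[(d:ℝ)].map T).restrict (sph d) :=
        (Measure.restrict_map T.continuous.measurable Metric.isClosed_sphere.measurableSet).symm
    _ = μH[(d:ℝ)].restrict (sph d) := by
        rw [show ⇑T = ⇑T.toIsometryEquiv from rfl, IsometryEquiv.map_hausdorffMeasure]

lemma integral_comp_inner_sigmad_eq (d : ℕ) (f : ℝ → ℝ) {y z : E d} (hy : y ∈ sph d)
    (hz : z ∈ sph d) : ∫ u, f ⟪z, u⟫ ∂sigmad d = ∫ u, f ⟪y, u⟫ ∂sigmad d := by
  obtain ⟨T, hTy⟩ : ∃ T : E d ≃ₗᵢ[ℝ] E d, T y = z := ⟨_, Submodule.reflection_sub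
    ((mem_sphere_zero_iff_norm.mp hy).trans (mem_sphere_zero_iff_norm.mp hz).symm)⟩
  have hT : MeasurePreserving T.toHomeomorph.toMeasurableEquiv (sigmad d) (sigmad d) :=
    ⟨T.continuous.measurable, sigmad_map_linearIsometryEquiv d T⟩
  rw [← hT.integral_comp' (fun u => f ⟪z, u⟫), ← hTy]
  simp only [Homeomorph.toMeasurableEquiv_coe, LinearIsometryEquiv.coe_toHomeomorph,
    LinearIsometryEquiv.inner_map_map]

lemma inner_eq_sum_mul {d : ℕ} (w u : E d) : ⟪w, u⟫ = ∑ j, w j * u j := by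
  simp [PiLp.inner_apply, mul_comm]

lemma IsDesign.average_eval_inner {d L : ℕ} {ι : Type} [Fintype ι] {x : ι → E d}
    (hdes : IsDesign d L x) {q : ℝ[X]} (hq : q.natDegree ≤ L) (w : E d) :
    (Fintype.card ι : ℝ)⁻¹ * ∑ i, q.eval ⟪w, x i⟫ = ∫ u, q.eval ⟪w, u⟫ ∂sigmad d := by
  have hdeg : (Polynomial.aeval (MvPolynomial.linearForm fun j => w j) q).totalDegree ≤ L :=
    calc _ ≤ q.natDegree * 1 := (MvPolynomial.totalDegree_aeval_le _ q).trans
            (Nat.mul_le_mul_left _ (MvPolynomial.totalDegree_linearForm_le _))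
      _ ≤ L := by rwa [mul_one]
  simpa only [MvPolynomial.eval_aeval, MvPolynomial.eval_linearForm, ← inner_eq_sum_mul]
    using hdes _ hdeg

lemma IsDesign.sum_eval_inner_eq {d L : ℕ} {ι : Type} [Fintype ι] {x : ι → E d}
    (hdes : IsDesign d L x) {q : ℝ[X]} (hq : q.natDegree ≤ L) {y z : E d} (hy : y ∈ sph d)
    (hz : z ∈ sph d) : ∑ i, q.eval ⟪z, x i⟫ = ∑ i, q.eval ⟪y, x i⟫ := by
  rcases isEmpty_or_nonempty ι with hι | hι
  · simp
  refine mul_left_cancel₀ (inv_ne_zero (Nat.cast_ne_zero.mpr (Fintype.card_ne_zero (α := ι)))) ?_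
  rw [hdes.average_eval_inner hq, hdes.average_eval_inner hq]
  exact integral_comp_inner_sigmad_eq d q.eval hy hz

theorem max_principle_general (d m N L : ℕ)
    (g : ℝ → EReal)
    (t : Fin (m+1) → ℝ)
    (q : Polynomial ℝ) (hdeg : q.natDegree ≤ L)
    (hval : ∀ i, ((q.eval (t i) : ℝ) : EReal) = g (t i))
    (hge : ∀ s ∈ Icc (-1:ℝ) 1, g s ≤ ((q.eval s : ℝ) : EReal))
    (x : Fin N → E d) (hx : ∀ i, x i ∈ sph d) (hdes : IsDesign d L x)
    (y : E d) (hy : y ∈ sph d) (hD : ∀ i, ∃ j, (inner ℝ y (x i) : ℝ) = t j) :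
    ∀ z ∈ sph d, ∑ i, g (inner ℝ z (x i) : ℝ) ≤ ∑ i, g (inner ℝ y (x i) : ℝ) := by
  intro z hz
  have hzx : ∀ i, ⟪z, x i⟫ ∈ Icc (-1:ℝ) 1 := fun i => real_inner_mem_Icc_of_norm_eq_one
    (mem_sphere_zero_iff_norm.mp hz) (mem_sphere_zero_iff_norm.mp (hx i))
  calc ∑ i, g ⟪z, x i⟫
      ≤ ∑ i, ((q.eval ⟪z, x i⟫ : ℝ) : EReal) := Finset.sum_le_sum fun i _ => hge _ (hzx i)
    _ = ((∑ i, q.eval ⟪z, x i⟫ : ℝ) : EReal) := (EReal.coe_finset_sum _ _).symm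
    _ = ((∑ i, q.eval ⟪y, x i⟫ : ℝ) : EReal) := by rw [hdes.sum_eval_inner_eq hdeg hy hz]
    _ = ∑ i, ((q.eval ⟪y, x i⟫ : ℝ) : EReal) := EReal.coe_finset_sum _ _
    _ = ∑ i, g ⟪y, x i⟫ := Finset.sum_congr rfl fun i _ => by
        obtain ⟨j, hj⟩ := hD i
        rw [hj, hval j]

/-- Maximum principle: if a polynomial `q` of degree at most `L` dominates `g`
on `[-1,1]` and interpolates it at the nodes `t 0 < … < t m` forming the set
`A`, `ω_N` is a spherical `L`-design, and `y ∈ S^d` satisfies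
`D(y, ω_N) ⊆ A`, then the potential `p^g(·, ω_N)` attains its absolute
maximum over `S^d` at `y`. -/
theorem max_principle (d m N L : ℕ) (hd : 1 ≤ d) (hm : 1 ≤ m)
    (g : ℝ → EReal)
    (t : Fin (m+1) → ℝ) (hmono : StrictMono t) (htmem : ∀ i, t i ∈ Icc (-1:ℝ) 1)
    (q : Polynomial ℝ) (hdeg : q.natDegree ≤ L)
    (hval : ∀ i, ((q.eval (t i) : ℝ) : EReal) = g (t i))
    (hge : ∀ s ∈ Icc (-1:ℝ) 1, g s ≤ ((q.eval s : ℝ) : EReal))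
    (x : Fin N → E d) (hx : ∀ i, x i ∈ sph d) (hdes : IsDesign d L x)
    (y : E d) (hy : y ∈ sph d) (hD : ∀ i, ∃ j, (inner ℝ y (x i) : ℝ) = t j) :
    ∀ z ∈ sph d, ∑ i, g (inner ℝ z (x i) : ℝ) ≤ ∑ i, g (inner ℝ y (x i) : ℝ) :=
  max_principle_general d m N L g t q hdeg hval hge x hx hdes y hy hD
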